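/- If G is a graph with n vertices, m edges, spectral radius μ, and 1 ≤ p ≤ 2, then ‖G‖_{S_p}^p ≤ μ^p + (n-1)^{1-p/2} (2m - μ²)^{p/2}. -/

import Mathlib

open Finset

/-- Singular values (unsorted) of a complex matrix: square roots of eigenvalues of `A * Aᴴ`. -/
noncomputable def svalC {m n : ℕ} (A : Matrix (Fin m) (Fin n) ℂ) : Fin m → ℝ :=
  fun i => Real.sqrt ((Matrix.isHermitian_mul_conjTranspose_self A).eigenvalues i)

/-- Singular values of a complex matrix sorted in decreasing order. -/
noncomputable def svalCSorted {m n : ℕ} (A : Matrix (Fin m) (Fin n) ℂ) : Fin m → ℝ :=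
  svalC A ∘ ⇑(Tuple.sort (fun i => -(svalC A i)))

/-- Singular values (unsorted) of a real matrix. -/
noncomputable def svalR {m n : ℕ} (A : Matrix (Fin m) (Fin n) ℝ) : Fin m → ℝ :=
  fun i => Real.sqrt ((Matrix.isHermitian_mul_conjTranspose_self A).eigenvalues i)

/-- Singular values of a real matrix sorted in decreasing order. -/
noncomputable def svalRSorted {m n : ℕ} (A : Matrix (Fin m) (Fin n) ℝ) : Fin m → ℝ :=
  svalR A ∘ ⇑(Tuple.sort (fun i => -(svalR A i)))

/-- Ky Fan `k`-norm of a complex matrix: the sum of its `k` largest singular values. -/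
noncomputable def kyFanC {m n : ℕ} (A : Matrix (Fin m) (Fin n) ℂ) (k : ℕ) : ℝ :=
  ∑ i : Fin m, if (i : ℕ) < k then svalCSorted A i else 0

/-- Ky Fan `k`-norm of a real matrix. -/
noncomputable def kyFanR {m n : ℕ} (A : Matrix (Fin m) (Fin n) ℝ) (k : ℕ) : ℝ :=
  ∑ i : Fin m, if (i : ℕ) < k then svalRSorted A i else 0

/-- The adjacency matrix of a simple graph is Hermitian (over `ℝ`). -/
lemma adjHerm {n : ℕ} (G : SimpleGraph (Fin n)) [DecidableRel G.Adj] :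
    (G.adjMatrix ℝ).IsHermitian := by
  have h := G.isSymm_adjMatrix (α := ℝ)
  unfold Matrix.IsHermitian
  rw [Matrix.conjTranspose_eq_transpose_of_trivial]
  exact h

/-- Singular values of a graph (unsorted). -/
noncomputable def gsval {n : ℕ} (G : SimpleGraph (Fin n)) [DecidableRel G.Adj] : Fin n → ℝ :=
  svalR (G.adjMatrix ℝ)

/-- Singular values of a graph sorted in decreasing order. -/
noncomputable def gsvalSorted {n : ℕ} (G : SimpleGraph (Fin n)) [DecidableRel G.Adj] : Fin n → ℝ :=
  svalRSorted (G.adjMatrix ℝ)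

/-- Eigenvalues of a graph sorted in decreasing order: `geigSorted G 0 = μ₁ ≥ ⋯ ≥ μₙ`. -/
noncomputable def geigSorted {n : ℕ} (G : SimpleGraph (Fin n)) [DecidableRel G.Adj] : Fin n → ℝ :=
  (adjHerm G).eigenvalues ∘ ⇑(Tuple.sort (fun i => -((adjHerm G).eigenvalues i)))

/-- Ky Fan `k`-norm of a graph. -/
noncomputable def kyFanG {n : ℕ} (G : SimpleGraph (Fin n)) [DecidableRel G.Adj] (k : ℕ) : ℝ :=
  kyFanR (G.adjMatrix ℝ) k
/-!
The squared singular values of the adjacency matrix `A` are the eigenvalues of `A Aᴴ = A²`: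
they are nonnegative, they sum to `tr A² = 2m`, and one of them is `μ²` (with `μ ≥ 0` because
`tr A = 0`). Split that one off and bound the remaining `n - 1` terms by concavity of
`x ↦ x ^ (p / 2)`.
-/

open Matrix

theorem Real.sum_rpow_le_card_rpow_mul_rpow_sum {ι : Type*} (s : Finset ι) {a : ι → ℝ}
    (ha : ∀ i ∈ s, 0 ≤ a i) {q : ℝ} (hq0 : 0 ≤ q) (hq1 : q ≤ 1) :
    ∑ i ∈ s, a i ^ q ≤ (#s : ℝ) ^ (1 - q) * (∑ i ∈ s, a i) ^ q := by
  rcases s.eq_empty_or_nonempty with rfl | hs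
  · simp only [Finset.sum_empty]
    positivity
  have hN : (0 : ℝ) < #s := by exact_mod_cast hs.card_pos
  have jensen := (Real.concaveOn_rpow hq0 hq1).le_map_sum (t := s) (w := fun _ => (#s : ℝ)⁻¹)
    (p := a) (fun _ _ => by positivity) (by simp [hN.ne']) ha
  simp only [smul_eq_mul, ← Finset.mul_sum] at jensen
  rw [Real.mul_rpow (by positivity) (Finset.sum_nonneg ha), Real.inv_rpow hN.le] at jensen
  calc ∑ i ∈ s, a i ^ q = #s * ((#s : ℝ)⁻¹ * ∑ i ∈ s, a i ^ q) := by field_simp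
    _ ≤ #s * ((#s : ℝ) ^ q)⁻¹ * (∑ i ∈ s, a i) ^ q := by
      rw [mul_assoc]
      gcongr
    _ = (#s : ℝ) ^ (1 - q) * (∑ i ∈ s, a i) ^ q := by
      rw [Real.rpow_sub hN, Real.rpow_one, div_eq_mul_inv]

theorem Real.sum_rpow_le_rpow_add_card_sub_one_mul {ι : Type*} [Fintype ι] [DecidableEq ι]
    {a : ι → ℝ} (ha : ∀ i, 0 ≤ a i) (i₀ : ι) {q : ℝ} (hq0 : 0 ≤ q) (hq1 : q ≤ 1) :
    ∑ i, a i ^ q ≤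
      a i₀ ^ q + (Fintype.card ι - 1 : ℝ) ^ (1 - q) * (∑ i, a i - a i₀) ^ q := by
  rw [← Finset.add_sum_erase _ _ (Finset.mem_univ i₀),
    ← Finset.sum_erase_eq_sub (Finset.mem_univ i₀)]
  gcongr
  refine (Real.sum_rpow_le_card_rpow_mul_rpow_sum _ (fun i _ => ha i) hq0 hq1).trans_eq ?_
  rw [Finset.card_erase_of_mem (Finset.mem_univ i₀), Finset.card_univ,
    Nat.cast_sub (Fintype.card_pos_iff.2 ⟨i₀⟩), Nat.cast_one]

theorem Matrix.IsHermitian.exists_eigenvalues_mul_conjTranspose_self_eq_sq {𝕜 n : Type*}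
    [RCLike 𝕜] [Fintype n] [DecidableEq n] {A : Matrix n n 𝕜} (hA : A.IsHermitian) (j : n) :
    ∃ i, (isHermitian_mul_conjTranspose_self A).eigenvalues i = hA.eigenvalues j ^ 2 := by
  have hmem := spectrum.pow_mem_pow A 2 (hA.eigenvalues_mem_spectrum_real j)
  rwa [sq A, ← congrArg (A * ·) hA.eq,
    (isHermitian_mul_conjTranspose_self A).spectrum_real_eq_range_eigenvalues] at hmem

theorem Matrix.IsHermitian.sum_eigenvalues_eq_trace {n : Type*} [Fintype n] [DecidableEq n]
    {A : Matrix n n ℝ} (hA : A.IsHermitian) : ∑ i, hA.eigenvalues i = A.trace := by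
  simp [hA.trace_eq_sum_eigenvalues]

theorem SimpleGraph.trace_adjMatrix_mul_self {V α : Type*} [Fintype V] (G : SimpleGraph V)
    [DecidableRel G.Adj] [NonAssocSemiring α] :
    (G.adjMatrix α * G.adjMatrix α).trace = 2 * #G.edgeFinset := by
  simp only [Matrix.trace, Matrix.diag_apply, adjMatrix_mul_self_apply_self]
  rw [← Nat.cast_sum, G.sum_degrees_eq_twice_card_edges, Nat.cast_mul, Nat.cast_two]

theorem SimpleGraph.sum_eigenvalues_adjMatrix_mul_conjTranspose {n : ℕ} (G : SimpleGraph (Fin n))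
    [DecidableRel G.Adj] :
    ∑ i, (isHermitian_mul_conjTranspose_self (G.adjMatrix ℝ)).eigenvalues i =
      2 * #G.edgeFinset := by
  rw [IsHermitian.sum_eigenvalues_eq_trace, (adjHerm G).eq, G.trace_adjMatrix_mul_self]

theorem Tuple.le_comp_sort_neg_zero {n : ℕ} (f : Fin n → ℝ) (hn : 0 < n) (j : Fin n) :
    f j ≤ (f ∘ Tuple.sort (fun i => -f i)) ⟨0, hn⟩ := by
  simpa using Tuple.monotone_sort (fun i => -f i)
    (Fin.mk_le_of_le_val (Nat.zero_le _) : ⟨0, hn⟩ ≤ (Tuple.sort fun i => -f i).symm j)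

theorem geigSorted_zero_nonneg {n : ℕ} (G : SimpleGraph (Fin n)) [DecidableRel G.Adj]
    (hn : 0 < n) : 0 ≤ geigSorted G ⟨0, hn⟩ := by
  obtain ⟨j, -, hj⟩ := Finset.exists_le_of_sum_le (Finset.univ_nonempty_iff.2 ⟨⟨0, hn⟩⟩)
    (f := 0) (g := (adjHerm G).eigenvalues)
    (by simp [IsHermitian.sum_eigenvalues_eq_trace, G.trace_adjMatrix (α := ℝ)])
  exact hj.trans (Tuple.le_comp_sort_neg_zero _ hn j)

/-- Koolen–Moulton-type bound: `‖G‖_{S_p}^p ≤ μ^p + (n-1)^{1-p/2}(2m - μ²)^{p/2}` for `1 ≤ p ≤ 2`. -/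
theorem schatten_le_koolen_moulton {n m : ℕ} (hn : 0 < n) (G : SimpleGraph (Fin n))
    [DecidableRel G.Adj] (hm : G.edgeFinset.card = m) (μ : ℝ) (hμ : μ = geigSorted G ⟨0, hn⟩)
    (p : ℝ) (hp1 : 1 ≤ p) (hp2 : p ≤ 2) :
    ∑ i, gsval G i ^ p ≤
      μ ^ p + ((n : ℝ) - 1) ^ (1 - p / 2) * (2 * (m : ℝ) - μ ^ 2) ^ (p / 2) := by
  set ν := (isHermitian_mul_conjTranspose_self (G.adjMatrix ℝ)).eigenvalues
  have hν : ∀ i, 0 ≤ ν i := eigenvalues_self_mul_conjTranspose_nonneg _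
  obtain ⟨i₀, hi₀⟩ : ∃ i, ν i = μ ^ 2 := hμ ▸
    (adjHerm G).exists_eigenvalues_mul_conjTranspose_self_eq_sq
      (Tuple.sort (fun i => -(adjHerm G).eigenvalues i) ⟨0, hn⟩)
  have hμ_nonneg : 0 ≤ μ := hμ ▸ geigSorted_zero_nonneg G hn
  calc ∑ i, gsval G i ^ p = ∑ i, ν i ^ (p / 2) :=
        Finset.sum_congr rfl fun i _ => (Real.rpow_div_two_eq_sqrt p (hν i)).symm
    _ ≤ ν i₀ ^ (p / 2) +
          (Fintype.card (Fin n) - 1 : ℝ) ^ (1 - p / 2) * (∑ i, ν i - ν i₀) ^ (p / 2) :=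
        Real.sum_rpow_le_rpow_add_card_sub_one_mul hν i₀ (by linarith) (by linarith)
    _ = μ ^ p + ((n : ℝ) - 1) ^ (1 - p / 2) * (2 * (m : ℝ) - μ ^ 2) ^ (p / 2) := by
        rw [hi₀, G.sum_eigenvalues_adjMatrix_mul_conjTranspose, hm, Fintype.card_fin,
          Real.rpow_div_two_eq_sqrt p (sq_nonneg μ), Real.sqrt_sq hμ_nonneg]
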